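/- arXiv:2601.09685 — 3 statements merged into one kernel-verified Lean document; each statement's English description precedes it below -/
import Mathlib

section
/- Let T be a linear subspace of M_{n×m}(ℂ), let M ⊆ M_m(ℂ) and N ⊆ M_n(ℂ) be unital *-subalgebras with M' ⊆ T† · T and T · T† ⊆ N' (where X · Y denotes the span of products and M', N' are commutants), and let R ⊆ M_m(ℂ) and S ⊆ M_n(ℂ) be subspaces. Then the following are equivalent: (1) R ⊆ T† · S · T; (2) T · R ⊆ S · T; (3) T · R · T† ⊆ S, provided additionally that R is an M'-bimodule (M' · R · M' ⊆ R) and S is an N'-bimodule (N' · S · N' ⊆ S). -/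
open Matrix

/-- Span of elementwise products of two subspaces of matrices. -/
noncomputable def mulS {a b c : Type*} [Fintype b] (T : Submodule ℂ (Matrix a b ℂ))
    (S : Submodule ℂ (Matrix b c ℂ)) : Submodule ℂ (Matrix a c ℂ) :=
  Submodule.span ℂ {x | ∃ t ∈ T, ∃ s ∈ S, x = t * s}

/-- The adjoint (conjugate-transpose) of a subspace of matrices. -/
noncomputable def dag {a b : Type*} (T : Submodule ℂ (Matrix a b ℂ)) :
    Submodule ℂ (Matrix b a ℂ) :=
  Submodule.span ℂ {x | ∃ t ∈ T, x = tᴴ}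

lemma mul_mem_mulS {a b c : Type*} [Fintype b] {T : Submodule ℂ (Matrix a b ℂ)}
    {S : Submodule ℂ (Matrix b c ℂ)} {t s} (ht : t ∈ T) (hs : s ∈ S) :
    t * s ∈ mulS T S :=
  Submodule.subset_span ⟨t, ht, s, hs, rfl⟩

lemma mulS_le {a b c : Type*} [Fintype b] {T : Submodule ℂ (Matrix a b ℂ)}
    {S : Submodule ℂ (Matrix b c ℂ)} {U : Submodule ℂ (Matrix a c ℂ)} :
    mulS T S ≤ U ↔ ∀ t ∈ T, ∀ s ∈ S, t * s ∈ U := by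
  constructor
  · intro h t ht s hs; exact h (mul_mem_mulS ht hs)
  · intro h
    rw [mulS, Submodule.span_le]
    rintro x ⟨t, ht, s, hs, rfl⟩
    exact h t ht s hs

lemma mulS_mono {a b c : Type*} [Fintype b] {T T' : Submodule ℂ (Matrix a b ℂ)}
    {S S' : Submodule ℂ (Matrix b c ℂ)} (h1 : T ≤ T') (h2 : S ≤ S') :
    mulS T S ≤ mulS T' S' :=
  mulS_le.2 fun t ht s hs => mul_mem_mulS (h1 ht) (h2 hs)

lemma mul_mem_mulS_left {a b c d : Type*} [Fintype b] [Fintype c]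
    {X : Submodule ℂ (Matrix a b ℂ)} {A : Submodule ℂ (Matrix b c ℂ)}
    {B : Submodule ℂ (Matrix c d ℂ)} {x y} (hx : x ∈ X) (hy : y ∈ mulS A B) :
    x * y ∈ mulS (mulS X A) B := by
  induction hy using Submodule.span_induction with
  | mem z hz =>
    obtain ⟨p, hp, q, hq, rfl⟩ := hz
    rw [← Matrix.mul_assoc]
    exact mul_mem_mulS (mul_mem_mulS hx hp) hq
  | zero => rw [Matrix.mul_zero]; exact Submodule.zero_mem _
  | add y z _ _ hy hz => rw [Matrix.mul_add]; exact Submodule.add_mem _ hy hz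
  | smul r y _ hy => rw [Matrix.mul_smul]; exact Submodule.smul_mem _ r hy

lemma mul_mem_mulS_right {a b c d : Type*} [Fintype b] [Fintype c]
    {A : Submodule ℂ (Matrix a b ℂ)} {B : Submodule ℂ (Matrix b c ℂ)}
    {X : Submodule ℂ (Matrix c d ℂ)} {x y} (hy : y ∈ mulS A B) (hx : x ∈ X) :
    y * x ∈ mulS A (mulS B X) := by
  induction hy using Submodule.span_induction with
  | mem z hz =>
    obtain ⟨p, hp, q, hq, rfl⟩ := hz
    rw [Matrix.mul_assoc]
    exact mul_mem_mulS hp (mul_mem_mulS hq hx)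
  | zero => rw [Matrix.zero_mul]; exact Submodule.zero_mem _
  | add y z _ _ hy hz => rw [Matrix.add_mul]; exact Submodule.add_mem _ hy hz
  | smul r y _ hy => rw [Matrix.smul_mul]; exact Submodule.smul_mem _ r hy

lemma mulS_assoc {a b c d : Type*} [Fintype b] [Fintype c]
    (A : Submodule ℂ (Matrix a b ℂ)) (B : Submodule ℂ (Matrix b c ℂ))
    (C : Submodule ℂ (Matrix c d ℂ)) :
    mulS (mulS A B) C = mulS A (mulS B C) := by
  refine le_antisymm (mulS_le.2 fun p hp q hq => mul_mem_mulS_right hp hq)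
    (mulS_le.2 fun p hp q hq => mul_mem_mulS_left hp hq)

/-- For a subspace T with M' ⊆ T†·T and T·T† ⊆ N', and bimodule
subspaces R (over M') and S (over N'), the conditions (1) R ⊆ T†·S·T,
(2) T·R ⊆ S·T, (3) T·R·T† ⊆ S are equivalent. -/
theorem stmt11 {m n : ℕ}
    (M : StarSubalgebra ℂ (Matrix (Fin m) (Fin m) ℂ))
    (N : StarSubalgebra ℂ (Matrix (Fin n) (Fin n) ℂ))
    (T : Submodule ℂ (Matrix (Fin n) (Fin m) ℂ))
    (R : Submodule ℂ (Matrix (Fin m) (Fin m) ℂ))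
    (S : Submodule ℂ (Matrix (Fin n) (Fin n) ℂ))
    (hM' : ∀ x, (∀ a ∈ M, x * a = a * x) → x ∈ mulS (dag T) T)
    (hN' : ∀ x ∈ mulS T (dag T), ∀ b ∈ N, x * b = b * x)
    (hR : ∀ a r a', (∀ c ∈ M, a * c = c * a) → r ∈ R →
      (∀ c ∈ M, a' * c = c * a') → a * r * a' ∈ R)
    (hS : ∀ b s b', (∀ c ∈ N, b * c = c * b) → s ∈ S →
      (∀ c ∈ N, b' * c = c * b') → b * s * b' ∈ S) :
    ((R ≤ mulS (mulS (dag T) S) T) ↔ (mulS T R ≤ mulS S T)) ∧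
    ((mulS T R ≤ mulS S T) ↔ (mulS (mulS T R) (dag T) ≤ S)) := by
  -- 1 is in T† T
  have h1 : (1 : Matrix (Fin m) (Fin m) ℂ) ∈ mulS (dag T) T :=
    hM' 1 (fun a _ => by rw [one_mul, mul_one])
  -- S is stable under left/right multiplication by elements of T T†
  have hSleft : ∀ x ∈ mulS T (dag T), ∀ s ∈ S, x * s ∈ S := by
    intro x hx s hs
    have := hS x s 1 (hN' x hx) hs (fun c _ => by rw [one_mul, mul_one])
    simpa using this
  have hSright : ∀ s ∈ S, ∀ x ∈ mulS T (dag T), s * x ∈ S := by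
    intro s hs x hx
    have := hS 1 s x (fun c _ => by rw [one_mul, mul_one]) hs (hN' x hx)
    simpa using this
  have key1 : mulS (mulS T (dag T)) S ≤ S := mulS_le.2 hSleft
  have key2 : mulS S (mulS T (dag T)) ≤ S := mulS_le.2 hSright
  have hTTdS : mulS T (mulS (dag T) S) ≤ S := by
    rw [← mulS_assoc]; exact key1
  -- the three implications needed
  have h12 : (R ≤ mulS (mulS (dag T) S) T) → (mulS T R ≤ mulS S T) := by
    intro h
    calc mulS T R ≤ mulS T (mulS (mulS (dag T) S) T) := mulS_mono le_rfl h
    _ = mulS (mulS T (mulS (dag T) S)) T := (mulS_assoc _ _ _).symm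
    _ ≤ mulS S T := mulS_mono hTTdS le_rfl
  have h21 : (mulS T R ≤ mulS S T) → (R ≤ mulS (mulS (dag T) S) T) := by
    intro h r hr
    have : (1 : Matrix (Fin m) (Fin m) ℂ) * r ∈ mulS (dag T) (mulS T R) :=
      mul_mem_mulS_right h1 hr
    rw [Matrix.one_mul] at this
    have h2 : mulS (dag T) (mulS T R) ≤ mulS (mulS (dag T) S) T := by
      calc mulS (dag T) (mulS T R) ≤ mulS (dag T) (mulS S T) := mulS_mono le_rfl h
      _ = mulS (mulS (dag T) S) T := (mulS_assoc _ _ _).symm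
    exact h2 this
  have h23 : (mulS T R ≤ mulS S T) → (mulS (mulS T R) (dag T) ≤ S) := by
    intro h
    calc mulS (mulS T R) (dag T) ≤ mulS (mulS S T) (dag T) := mulS_mono h le_rfl
    _ = mulS S (mulS T (dag T)) := mulS_assoc _ _ _
    _ ≤ S := key2
  have h32 : (mulS (mulS T R) (dag T) ≤ S) → (mulS T R ≤ mulS S T) := by
    intro h x hx
    have hx1 : x * (1 : Matrix (Fin m) (Fin m) ℂ) ∈ mulS (mulS (mulS T R) (dag T)) T :=
      mul_mem_mulS_left hx h1
    rw [Matrix.mul_one] at hx1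
    exact mulS_mono h le_rfl hx1
  exact ⟨⟨h12, h21⟩, ⟨h23, h32⟩⟩
end

section
/- Let M ⊆ M_m(ℂ) and N ⊆ M_n(ℂ) be unital *-subalgebras and φ† : N → M a unital *-homomorphism, with F = {v ∈ M_{n×m}(ℂ) : b v = v φ†(b) for all b ∈ N}. If T ⊆ F is a subspace satisfying M' ⊆ T† · T (spans of products; M' the commutant of M) and N' · T ⊆ T, then T = F. (In particular, the Kraus operator space of a trace-preserving *-cohomomorphism equals the intertwiner space of its adjoint homomorphism.) -/
open Matrix

/-- Let ψ = φ† : N → M be a unital *-homomorphism, and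
F = {v : b v = v ψ(b) for all b ∈ N} its intertwiner space. If a subspace T ⊆ F
satisfies M' ⊆ T†·T and N'·T ⊆ T, then T = F. -/
theorem stmt17 {m n : ℕ}
    (M : StarSubalgebra ℂ (Matrix (Fin m) (Fin m) ℂ))
    (N : StarSubalgebra ℂ (Matrix (Fin n) (Fin n) ℂ))
    (ψ : N →⋆ₐ[ℂ] M)
    (T : Submodule ℂ (Matrix (Fin n) (Fin m) ℂ))
    (hTF : ∀ v ∈ T, ∀ b : N,
      (b : Matrix (Fin n) (Fin n) ℂ) * v = v * (ψ b : Matrix (Fin m) (Fin m) ℂ))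
    (hM' : ∀ x, (∀ a ∈ M, x * a = a * x) → x ∈ mulS (dag T) T)
    (hN' : ∀ (c : Matrix (Fin n) (Fin n) ℂ) (v : Matrix (Fin n) (Fin m) ℂ),
      (∀ b ∈ N, c * b = b * c) → v ∈ T → c * v ∈ T) :
    ∀ v : Matrix (Fin n) (Fin m) ℂ,
      (∀ b : N, (b : Matrix (Fin n) (Fin n) ℂ) * v
        = v * (ψ b : Matrix (Fin m) (Fin m) ℂ)) ↔ v ∈ T := by
  intro v
  constructor
  · intro hv
    have hone : (1 : Matrix (Fin m) (Fin m) ℂ) ∈ mulS (dag T) T :=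
      hM' 1 (fun a _ => by simp)
    -- key: for t ∈ T, v * tᴴ ∈ N'
    have hcomm : ∀ t ∈ T, ∀ b ∈ N, (v * tᴴ) * b = b * (v * tᴴ) := by
      intro t ht b hb
      have hbN : star b ∈ N := star_mem hb
      have h1 : (star b) * t = t * (ψ ⟨star b, hbN⟩ : Matrix (Fin m) (Fin m) ℂ) :=
        hTF t ht ⟨star b, hbN⟩
      have h2 : (⟨star b, hbN⟩ : N) = star (⟨b, hb⟩ : N) := rfl
      have h5 : (ψ ⟨star b, hbN⟩ : Matrix (Fin m) (Fin m) ℂ)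
          = (ψ ⟨b, hb⟩ : Matrix (Fin m) (Fin m) ℂ)ᴴ := by
        rw [h2, map_star]; rfl
      rw [h5] at h1
      have h3 : tᴴ * b = (ψ ⟨b, hb⟩ : Matrix (Fin m) (Fin m) ℂ) * tᴴ := by
        calc tᴴ * b = ((star b) * t)ᴴ := by
              simp [Matrix.conjTranspose_mul, Matrix.star_eq_conjTranspose]
          _ = (t * (ψ ⟨b, hb⟩ : Matrix (Fin m) (Fin m) ℂ)ᴴ)ᴴ := by rw [h1]
          _ = _ := by simp [Matrix.conjTranspose_mul]
      have h4 : b * v = v * (ψ ⟨b, hb⟩ : Matrix (Fin m) (Fin m) ℂ) := hv ⟨b, hb⟩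
      calc v * tᴴ * b = v * (tᴴ * b) := by rw [Matrix.mul_assoc]
        _ = v * ((ψ ⟨b, hb⟩ : Matrix (Fin m) (Fin m) ℂ) * tᴴ) := by rw [h3]
        _ = (v * (ψ ⟨b, hb⟩ : Matrix (Fin m) (Fin m) ℂ)) * tᴴ := by
              rw [Matrix.mul_assoc]
        _ = b * (v * tᴴ) := by rw [← h4, Matrix.mul_assoc]
    -- v * x ∈ T for x ∈ dag T * T
    have key : ∀ x ∈ mulS (dag T) T, v * x ∈ T := by
      intro x hx
      induction hx using Submodule.span_induction with
      | mem x hx =>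
        obtain ⟨t, ht, s, hs, rfl⟩ := hx
        rw [← Matrix.mul_assoc]
        have : ∀ t' ∈ dag T, v * t' * s ∈ T := by
          intro t' ht'
          induction ht' using Submodule.span_induction with
          | mem u hu =>
            obtain ⟨w, hw, rfl⟩ := hu
            exact hN' (v * wᴴ) s (hcomm w hw) hs
          | zero => simp
          | add a b _ _ ha hb =>
            simpa [Matrix.mul_add, Matrix.add_mul] using T.add_mem ha hb
          | smul c a _ ha =>
            simpa [Matrix.mul_smul, Matrix.smul_mul] using T.smul_mem c ha
        exact this t ht
      | zero => simp
      | add a b _ _ ha hb => simpa [Matrix.mul_add] using T.add_mem ha hb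
      | smul c a _ ha => simpa [Matrix.mul_smul] using T.smul_mem c ha
    simpa using key 1 hone
  · intro hv b
    exact hTF v hv b
end

section
/- Let V be a finite set, M = ℂ^V the diagonal subalgebra of M_{|V|}(ℂ), and E a symmetric relation on V. Define the subspace R_E ⊆ M_{|V|}(ℂ) as the span of the matrix units e_{uv} with (v,u) ∈ E. Then R_E is an M'-bimodule (M' · R_E · M' ⊆ R_E, where M' = M is the commutant of the diagonal algebra), and R_E† = R_E. Moreover, E ↦ R_E is an order isomorphism between symmetric relations on V and self-adjoint M-bimodule subspaces of M_{|V|}(ℂ). -/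
open Matrix

/-- Membership in the diagonal subalgebra M = ℂ^V of M_{|V|}(ℂ). -/
def isDiag {V : Type*} (a : Matrix V V ℂ) : Prop := ∀ i j, i ≠ j → a i j = 0

/-- The subspace R_E spanned by the matrix units e_{uv} with (v,u) ∈ E. -/
noncomputable def RE {V : Type*} [DecidableEq V] (E : V → V → Prop) :
    Submodule ℂ (Matrix V V ℂ) :=
  Submodule.span ℂ {x | ∃ u v, E v u ∧ x = Matrix.single u v 1}

/-- The submodule of matrices supported on E. -/
noncomputable def ZE {V : Type*} (E : V → V → Prop) : Submodule ℂ (Matrix V V ℂ) where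
  carrier := {r | ∀ u v, ¬ E v u → r u v = 0}
  add_mem' := by
    intro a b ha hb u v h
    simp [Matrix.add_apply, ha u v h, hb u v h]
  zero_mem' := by intro u v h; simp
  smul_mem' := by
    intro c a ha u v h
    simp [Matrix.smul_apply, ha u v h]

lemma mem_RE_iff {V : Type*} [Fintype V] [DecidableEq V] (E : V → V → Prop)
    (r : Matrix V V ℂ) : r ∈ RE E ↔ ∀ u v, ¬ E v u → r u v = 0 := by
  constructor
  · intro hr
    have hle : RE E ≤ ZE E := by
      rw [RE, Submodule.span_le]
      rintro x ⟨u, v, hE, rfl⟩ u' v' h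
      simp only [Matrix.single, of_apply]
      split_ifs with h'
      · exact absurd (h'.1 ▸ h'.2 ▸ hE) h
      · rfl
    exact hle hr
  · intro h
    rw [matrix_eq_sum_single r]
    refine Submodule.sum_mem _ fun u _ => Submodule.sum_mem _ fun v _ => ?_
    by_cases hE : E v u
    · have : Matrix.single u v (r u v) = (r u v) • Matrix.single u v 1 := by
        simp
      rw [this]
      exact Submodule.smul_mem _ _ (Submodule.subset_span ⟨u, v, hE, rfl⟩)
    · rw [h u v hE, single_zero]
      exact Submodule.zero_mem _

lemma diag_mul_mul {V : Type*} [Fintype V] [DecidableEq V]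
    (a r a' : Matrix V V ℂ) (ha : isDiag a) (ha' : isDiag a') (i j : V) :
    (a * r * a') i j = a i i * r i j * a' j j := by
  rw [Matrix.mul_apply, Finset.sum_eq_single j]
  · rw [Matrix.mul_apply, Finset.sum_eq_single i]
    · intro k _ hk
      rw [ha i k (Ne.symm hk), zero_mul]
    · intro h; exact absurd (Finset.mem_univ i) h
  · intro k _ hk
    rw [ha' k j hk, mul_zero]
  · intro h; exact absurd (Finset.mem_univ j) h

lemma stdBasis_conjT {V : Type*} [DecidableEq V] (u v : V) :
    (Matrix.single u v (1 : ℂ))ᴴ = Matrix.single v u 1 := by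
  ext i j
  simp only [conjTranspose_apply, Matrix.single, of_apply, and_comm]
  split_ifs <;> simp

lemma dag_fixed_mem {V : Type*} {S : Submodule ℂ (Matrix V V ℂ)}
    (hS : dag S = S) {t : Matrix V V ℂ} (ht : t ∈ S) : tᴴ ∈ S := by
  rw [← hS]
  exact Submodule.subset_span ⟨t, ht, rfl⟩

/-- For a finite set V with diagonal algebra M = ℂ^V (whose commutant
M' is M itself, i.e. the diagonal matrices), the assignment E ↦ R_E sends each
symmetric relation E on V to a self-adjoint M'-bimodule subspace of M_{|V|}(ℂ), and
is an order isomorphism between symmetric relations on V and self-adjoint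
M-bimodule subspaces. -/
theorem stmt19 {V : Type*} [Fintype V] [DecidableEq V] :
    (∀ E : V → V → Prop, Symmetric E →
      (∀ a r a', isDiag a → r ∈ RE E → isDiag a' → a * r * a' ∈ RE E) ∧
      dag (RE E) = RE E) ∧
    (∀ E₁ E₂ : V → V → Prop, Symmetric E₁ → Symmetric E₂ →
      (RE E₁ ≤ RE E₂ ↔ ∀ u v, E₁ u v → E₂ u v)) ∧
    (∀ S : Submodule ℂ (Matrix V V ℂ),
      (∀ a r a', isDiag a → r ∈ S → isDiag a' → a * r * a' ∈ S) →
      dag S = S →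
      ∃ E : V → V → Prop, Symmetric E ∧ RE E = S) := by
  refine ⟨?_, ?_, ?_⟩
  · intro E hSym
    constructor
    · intro a r a' ha hr ha'
      rw [mem_RE_iff] at hr ⊢
      intro u v h
      rw [diag_mul_mul a r a' ha ha', hr u v h, mul_zero, zero_mul]
    · apply le_antisymm
      · rw [dag, Submodule.span_le]
        rintro x ⟨t, ht, rfl⟩
        rw [mem_RE_iff] at ht
        refine (mem_RE_iff E tᴴ).2 fun u v h => ?_
        rw [conjTranspose_apply, ht v u (fun h' => h (hSym h')), star_zero]
      · rw [RE, Submodule.span_le]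
        rintro x ⟨u, v, hE, rfl⟩
        refine Submodule.subset_span ⟨Matrix.single v u 1, ?_, (stdBasis_conjT v u).symm⟩
        exact Submodule.subset_span ⟨v, u, hSym hE, rfl⟩
  · intro E₁ E₂ _ _
    constructor
    · intro hle u v h
      have hm : Matrix.single v u (1 : ℂ) ∈ RE E₂ :=
        hle (Submodule.subset_span ⟨v, u, h, rfl⟩)
      rw [mem_RE_iff] at hm
      by_contra hE
      have := hm v u hE
      simp [Matrix.single] at this
    · intro h
      rw [RE, Submodule.span_le]
      rintro x ⟨u, v, hE, rfl⟩
      exact Submodule.subset_span ⟨u, v, h v u hE, rfl⟩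
  · intro S hbi hdag
    refine ⟨fun x y => Matrix.single y x (1 : ℂ) ∈ S, ?_, ?_⟩
    · intro x y hxy
      have := dag_fixed_mem hdag hxy
      rwa [stdBasis_conjT] at this
    · have hdiagE : ∀ u : V, isDiag (Matrix.single u u (1 : ℂ)) := by
        intro u i j hij
        simp only [Matrix.single, of_apply]
        split_ifs with h
        · exact absurd (h.1 ▸ h.2 ▸ rfl) hij
        · rfl
      have hextract : ∀ r ∈ S, ∀ u v, Matrix.single u v (r u v) ∈ S := by
        intro r hr u v
        have := hbi (Matrix.single u u 1) r (Matrix.single v v 1)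
          (hdiagE u) hr (hdiagE v)
        have heq : Matrix.single u u (1 : ℂ) * r * Matrix.single v v 1
            = Matrix.single u v (r u v) := by
          ext i j
          rw [diag_mul_mul _ _ _ (hdiagE u) (hdiagE v)]
          simp only [Matrix.single, of_apply, and_self]
          split_ifs with h1 h2 h3 h3 h2 <;>
            first
              | (rw [h1, h2]; ring)
              | simp_all
        rwa [heq] at this
      apply le_antisymm
      · rw [RE, Submodule.span_le]
        rintro x ⟨u, v, hE, rfl⟩
        exact hE
      · intro r hr
        rw [mem_RE_iff]
        intro u v h
        by_contra hne
        apply h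
        have := Submodule.smul_mem S (r u v)⁻¹ (hextract r hr u v)
        rwa [smul_single, smul_eq_mul, inv_mul_cancel₀ hne] at this
end
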